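/- For all integers n ≥ 1 and 0 ≤ k ≤ n, let e = (1, 0, …, 0) ∈ ℝ^{n+1}, so that e, −e ∈ Q⁺ and the tangent space of Q⁺ at ±e is T = {v ∈ ℝ^{n+1} : v_0 = 0}. Then the real subspaces D(π∘J)_e(T) = {(v_j(1 + 2i·σ_j))_{j=1}^n : v ∈ ℝ^n} and D(π∘J)_{−e}(T) = {(v_j(1 − 2i·σ_j))_{j=1}^n : v ∈ ℝ^n} of ℂ^n (viewed as a real vector space) are complementary: their intersection is {0} and their sum is all of ℂ^n. (The unique self-intersection of the positive slice of the surgery trace is transverse.) -/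

import Mathlib

open scoped BigOperators

/-- `σ_j = 1` for `1 ≤ j ≤ k`, `σ_j = −1` for `k < j ≤ n`; here `j : Fin n` denotes the
coordinate index `j + 1 ∈ {1, …, n}`. -/
def sgn (n k : ℕ) (j : Fin n) : ℝ := if (j : ℕ) + 1 ≤ k then 1 else -1

/-- The local Lagrangian surgery trace `J : ℝ^{n+1} → ℂ^n × ℂ`. -/
noncomputable def surgeryTrace (n k : ℕ) (x : Fin (n + 1) → ℝ) : (Fin n → ℂ) × ℂ :=
  (fun j => (x j.succ : ℂ) + 2 * Complex.I * (sgn n k j : ℂ) * (x j.succ : ℂ) * (x 0 : ℂ),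
   (((x 0) ^ 2 + ∑ j, sgn n k j * (x j.succ) ^ 2 : ℝ) : ℂ) - Complex.I * (x 0 : ℂ))

/-- The positive slice domain `Q⁺ = {x ∈ ℝ^{n+1} : x_0² + ∑ σ_j x_j² = 1}`. -/
def Qpos (n k : ℕ) : Set (Fin (n + 1) → ℝ) :=
  {x | (x 0) ^ 2 + ∑ j, sgn n k j * (x j.succ) ^ 2 = 1}

/-!
On `T = {v_0 = 0}` the derivative of `π ∘ J` at any point `p` is diagonal: it multiplies the
coordinate `v_j` by `1 + 2iσ_j p_0`. At `±e` these factors are `1 ± 2iσ_j`, and since `σ_j ≠ 0`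
the real lines they span in `ℂ` are transverse, so the two images are complementary coordinate
by coordinate.
-/

open Complex

lemma sgn_ne_zero (n k : ℕ) (j : Fin n) : sgn n k j ≠ 0 := by
  unfold sgn; split_ifs <;> norm_num

def realDiagSpan {ι : Type*} (w : ι → ℂ) : Set (ι → ℂ) :=
  {z | ∃ v : ι → ℝ, ∀ j, z j = (v j : ℂ) * w j}

lemma eq_zero_of_ofReal_mul_one_add_eq {s a b : ℝ} (hs : s ≠ 0)
    (h : (a : ℂ) * (1 + 2 * I * s) = b * (1 - 2 * I * s)) : a = 0 := by
  have hre : a = b := by simpa using congrArg re h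
  have him : a * (2 * s) = -(b * (2 * s)) := by simpa using congrArg im h
  have : a * (4 * s) = 0 := by linear_combination him + 2 * s * hre
  simpa [hs] using this

lemma eq_ofReal_mul_one_add_add_ofReal_mul_one_sub {s : ℝ} (hs : s ≠ 0) (z : ℂ) :
    z = ((z.re / 2 + z.im / (4 * s) : ℝ) : ℂ) * (1 + 2 * I * s) +
      ((z.re / 2 - z.im / (4 * s) : ℝ) : ℂ) * (1 - 2 * I * s) := by
  apply Complex.ext <;>
    simp only [mul_re, mul_im, add_re, add_im, sub_re, sub_im, ofReal_re, ofReal_im, one_re,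
      one_im, I_re, I_im, re_ofNat, im_ofNat] <;>
    field_simp <;> ring

section Transversality

variable {ι : Type*} {s : ι → ℝ}

lemma realDiagSpan_inter_eq_zero (hs : ∀ j, s j ≠ 0) :
    realDiagSpan (fun j => 1 + 2 * I * s j) ∩ realDiagSpan (fun j => 1 - 2 * I * s j) = {0} := by
  ext z
  constructor
  · rintro ⟨⟨a, ha⟩, ⟨b, hb⟩⟩
    funext j
    rw [ha j, eq_zero_of_ofReal_mul_one_add_eq (hs j) ((ha j).symm.trans (hb j))]
    simp
  · rintro rfl
    exact ⟨⟨0, fun j => by simp⟩, ⟨0, fun j => by simp⟩⟩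

lemma exists_add_mem_realDiagSpan (hs : ∀ j, s j ≠ 0) (z : ι → ℂ) :
    ∃ a ∈ realDiagSpan (fun j => 1 + 2 * I * s j),
      ∃ b ∈ realDiagSpan (fun j => 1 - 2 * I * s j), z = a + b :=
  ⟨_, ⟨fun j => (z j).re / 2 + (z j).im / (4 * s j), fun _ => rfl⟩,
    _, ⟨fun j => (z j).re / 2 - (z j).im / (4 * s j), fun _ => rfl⟩,
    funext fun j => eq_ofReal_mul_one_add_add_ofReal_mul_one_sub (hs j) (z j)⟩

end Transversality

lemma hasFDerivAt_surgeryTrace_fst (n k : ℕ) (p : Fin (n + 1) → ℝ) :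
    HasFDerivAt (fun x => (surgeryTrace n k x).1)
      (ContinuousLinearMap.pi fun j : Fin n =>
        (1 + 2 * I * sgn n k j * p 0) • ofRealCLM.comp (ContinuousLinearMap.proj j.succ) +
        (2 * I * sgn n k j * p j.succ) • ofRealCLM.comp (ContinuousLinearMap.proj 0)) p := by
  rw [hasFDerivAt_pi']
  intro j
  have hJ : (fun x => (surgeryTrace n k x).1 j) =
      fun x => (x j.succ : ℂ) * (1 + 2 * I * sgn n k j * x 0) := by
    funext x; simp only [surgeryTrace]; ring
  have hcoord : ∀ i : Fin (n + 1), HasFDerivAt (fun x : Fin (n + 1) → ℝ => (x i : ℂ))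
      (ofRealCLM.comp (ContinuousLinearMap.proj i)) p :=
    fun i => (ofRealCLM.comp (ContinuousLinearMap.proj (R := ℝ) (φ := fun _ => ℝ) i)).hasFDerivAt
  have := (hcoord j.succ).mul (((hcoord 0).const_mul (2 * I * sgn n k j)).const_add 1)
  rw [hJ, ContinuousLinearMap.proj_pi]
  refine this.congr_fderiv ?_
  ext v; simp; ring

lemma fderiv_surgeryTrace_fst_image (n k : ℕ) (p : Fin (n + 1) → ℝ) :
    fderiv ℝ (fun x => (surgeryTrace n k x).1) p '' {v | v 0 = 0} =
      realDiagSpan fun j => 1 + 2 * I * sgn n k j * p 0 := by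
  rw [(hasFDerivAt_surgeryTrace_fst n k p).fderiv]
  ext z
  constructor
  · rintro ⟨v, hv0, rfl⟩
    exact ⟨fun j => v j.succ, fun j => by simp [hv0.out, mul_comm]⟩
  · rintro ⟨w, hw⟩
    refine ⟨Fin.cons 0 w, rfl, funext fun j => ?_⟩
    simp [hw j, mul_comm]

theorem stmt3_general (n k : ℕ) :
    let e : Fin (n + 1) → ℝ := Pi.single 0 1
    let T : Set (Fin (n + 1) → ℝ) := {v | v 0 = 0}
    let A : Set (Fin n → ℂ) := fderiv ℝ (fun x => (surgeryTrace n k x).1) e '' T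
    let B : Set (Fin n → ℂ) := fderiv ℝ (fun x => (surgeryTrace n k x).1) (-e) '' T
    e ∈ Qpos n k ∧ (-e) ∈ Qpos n k ∧
    A = {z | ∃ v : Fin n → ℝ, ∀ j, z j = (v j : ℂ) * (1 + 2 * Complex.I * (sgn n k j : ℂ))} ∧
    B = {z | ∃ v : Fin n → ℝ, ∀ j, z j = (v j : ℂ) * (1 - 2 * Complex.I * (sgn n k j : ℂ))} ∧
    A ∩ B = {0} ∧
    (∀ z : Fin n → ℂ, ∃ a ∈ A, ∃ b ∈ B, z = a + b) := by
  intro e T A B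
  have hA : A = realDiagSpan fun j => 1 + 2 * I * sgn n k j := by
    simpa [e] using fderiv_surgeryTrace_fst_image n k e
  have hB : B = realDiagSpan fun j => 1 - 2 * I * sgn n k j := by
    simpa [e, sub_eq_add_neg] using fderiv_surgeryTrace_fst_image n k (-e)
  refine ⟨by simp [e, Qpos], by simp [e, Qpos], hA, hB, ?_, ?_⟩
  · rw [hA, hB]
    exact realDiagSpan_inter_eq_zero (sgn_ne_zero n k)
  · rw [hA, hB]
    exact exists_add_mem_realDiagSpan (sgn_ne_zero n k)

/-- The unique self-intersection of the positive slice of the surgery trace is transverse: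
with `e = (1,0,…,0)` (so `e, -e ∈ Q⁺`, with tangent space `T = {v : v_0 = 0}` at `±e`), the
images of `T` under `D(π∘J)` at `e` and at `−e` are the explicitly given real subspaces
`{(v_j(1 + 2iσ_j))_j}` and `{(v_j(1 − 2iσ_j))_j}` of `ℂ^n`, which are complementary. -/
theorem stmt3 (n k : ℕ) (hn : 1 ≤ n) (hk : k ≤ n) :
    let e : Fin (n + 1) → ℝ := Pi.single 0 1
    let T : Set (Fin (n + 1) → ℝ) := {v | v 0 = 0}
    let A : Set (Fin n → ℂ) := fderiv ℝ (fun x => (surgeryTrace n k x).1) e '' T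
    let B : Set (Fin n → ℂ) := fderiv ℝ (fun x => (surgeryTrace n k x).1) (-e) '' T
    e ∈ Qpos n k ∧ (-e) ∈ Qpos n k ∧
    A = {z | ∃ v : Fin n → ℝ, ∀ j, z j = (v j : ℂ) * (1 + 2 * Complex.I * (sgn n k j : ℂ))} ∧
    B = {z | ∃ v : Fin n → ℝ, ∀ j, z j = (v j : ℂ) * (1 - 2 * Complex.I * (sgn n k j : ℂ))} ∧
    A ∩ B = {0} ∧
    (∀ z : Fin n → ℂ, ∃ a ∈ A, ∃ b ∈ B, z = a + b) :=
  stmt3_general n k
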